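/- For fixed k ∈ ℕ and μ with Re μ > -1/2, the linear span of the functions (1-z)^μ (log(1-z))^j for 0 ≤ j ≤ k is a finite-dimensional invariant subspace for the adjoint Cesàro operator C* on H². -/

import Mathlib

open Complex Metric

/-- The adjoint Cesàro operator, via
`(C*f)(z) = (1/(1-z)) ∫_z^1 f(ξ) dξ = ∫₀¹ f(z + t(1-z)) dt`. -/
noncomputable def cesaroStar (f : ℂ → ℂ) (z : ℂ) : ℂ :=
  ∫ t in (0:ℝ)..1, f (z + (t : ℂ) * (1 - z))

/-!
On the segment from `z` to `1` we have `1 - (z + t(1 - z)) = (1 - t)(1 - z)` with `1 - t > 0`, so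
the principal branches split as `(1 - t)^μ (1 - z)^μ` and `log (1 - t) + log (1 - z)`. Expanding
the binomial, `C* e_j = ∑_{i ≤ j} (j choose i) c_{j-i} e_i`, where `e_j = (1 - z)^μ log (1 - z)^j`
and `c_m = ∫₀¹ (1 - t)^μ log (1 - t)^m dt` converges because `Re μ > -1`. So `C*` acts on
`e_0, …, e_k` by a triangular matrix.
-/

open MeasureTheory

theorem cesaroStar_finset_sum {ι : Type*} (s : Finset ι) (c : ι → ℂ) (f : ι → ℂ → ℂ) {z : ℂ}
    (hf : ∀ i ∈ s, IntervalIntegrable (fun t : ℝ => f i (z + t * (1 - z))) volume 0 1) :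
    cesaroStar (∑ i ∈ s, c i • f i) z = ∑ i ∈ s, c i * cesaroStar (f i) z := by
  simp only [cesaroStar, Finset.sum_apply, Pi.smul_apply, smul_eq_mul]
  rw [intervalIntegral.integral_finsetSum fun i hi => (hf i hi).const_mul (c i)]
  simp only [intervalIntegral.integral_const_mul]

theorem exists_eqOn_cesaroStar_of_mem_span {ι : Type*} {e : ι → ℂ → ℂ} {s : Set ι} {U : Set ℂ}
    {V : Submodule ℂ (ℂ → ℂ)}
    (hint : ∀ i ∈ s, ∀ z ∈ U, IntervalIntegrable (fun t : ℝ => e i (z + t * (1 - z))) volume 0 1)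
    (hV : ∀ i ∈ s, ∃ g ∈ V, Set.EqOn (cesaroStar (e i)) g U) {f : ℂ → ℂ}
    (hf : f ∈ Submodule.span ℂ (e '' s)) :
    ∃ g ∈ V, Set.EqOn (cesaroStar f) g U := by
  obtain ⟨l, hls, rfl⟩ := (Finsupp.mem_span_image_iff_linearCombination ℂ).mp hf
  choose! g hgV hg using hV
  refine ⟨∑ i ∈ l.support, l i • g i, V.sum_mem fun i hi => V.smul_mem _ (hgV i (hls hi)),
    fun z hz => ?_⟩
  rw [Finsupp.linearCombination_apply, Finsupp.sum,
    cesaroStar_finset_sum _ _ _ fun i hi => hint i (hls hi) z hz]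
  simp only [Finset.sum_apply, Pi.smul_apply, smul_eq_mul]
  exact Finset.sum_congr rfl fun i hi => by rw [hg i (hls hi) hz]

theorem intervalIntegrable_cpow_mul_log_pow {μ : ℂ} (hμ : -1 < μ.re) (m : ℕ) :
    IntervalIntegrable (fun s : ℝ => (s : ℂ) ^ μ * (Real.log s : ℂ) ^ m) volume 0 1 := by
  -- `|log s · s^ε| < 1/ε` trades each logarithm for `s^(-ε)`, and `m ε < Re μ + 1` keeps the
  -- resulting majorant `s^(Re μ - m ε)` integrable.
  set ε : ℝ := (μ.re + 1) / (m + 1)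
  have hε : 0 < ε := div_pos (by linarith) (by positivity)
  have hexp : -1 < μ.re - m * ε := by
    have : m * ε < μ.re + 1 := by
      rw [mul_div_assoc', div_lt_iff₀ (by positivity)]
      nlinarith
    linarith
  have hbound :=
    (intervalIntegral.intervalIntegrable_rpow' (a := 0) (b := 1) hexp).const_mul (ε ^ m)⁻¹
  rw [intervalIntegrable_iff_integrableOn_Ioc_of_le zero_le_one] at hbound ⊢
  refine hbound.mono' (by fun_prop) ((ae_restrict_iff' measurableSet_Ioc).mpr ?_)
  filter_upwards with s ⟨hs0, hs1⟩
  have hlog : |Real.log s * s ^ ε| ^ m ≤ (ε ^ m)⁻¹ := by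
    rw [← inv_pow, ← one_div]
    exact pow_le_pow_left₀ (abs_nonneg _) (Real.abs_log_mul_self_rpow_lt s ε hs0 hs1 hε).le m
  calc ‖(s : ℂ) ^ μ * (Real.log s : ℂ) ^ m‖
      = s ^ (μ.re - m * ε) * |Real.log s * s ^ ε| ^ m := by
        rw [norm_mul, norm_pow, norm_cpow_eq_rpow_re_of_pos hs0, norm_real, Real.norm_eq_abs,
          abs_mul, mul_pow, Real.abs_rpow_of_nonneg hs0.le, abs_of_pos hs0,
          ← Real.rpow_mul_natCast hs0.le, Real.rpow_sub hs0]
        field_simp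
    _ ≤ (ε ^ m)⁻¹ * s ^ (μ.re - m * ε) := by
        rw [mul_comm]; gcongr

theorem intervalIntegrable_one_sub_cpow_mul_log_pow {μ : ℂ} (hμ : -1 < μ.re) (m : ℕ) :
    IntervalIntegrable (fun t : ℝ => ((1 - t : ℝ) : ℂ) ^ μ * (Real.log (1 - t) : ℂ) ^ m)
      volume 0 1 := by
  simpa using ((intervalIntegrable_cpow_mul_log_pow hμ m).comp_sub_left 1).symm

theorem ofReal_mul_cpow_of_pos {r : ℝ} (hr : 0 < r) {x : ℂ} (hx : x ≠ 0) (μ : ℂ) :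
    ((r : ℂ) * x) ^ μ = (r : ℂ) ^ μ * x ^ μ := by
  have hr' : (r : ℂ) ≠ 0 := ofReal_ne_zero.mpr hr.ne'
  rw [cpow_def_of_ne_zero (mul_ne_zero hr' hx), cpow_def_of_ne_zero hr', cpow_def_of_ne_zero hx,
    log_ofReal_mul hr hx, ofReal_log hr.le, add_mul, exp_add]

noncomputable def powLog (μ : ℂ) (j : ℕ) (z : ℂ) : ℂ :=
  (1 - z) ^ μ * (Complex.log (1 - z)) ^ j

theorem eqOn_powLog_segment (μ : ℂ) (j : ℕ) {z : ℂ} (hz : z ≠ 1) :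
    Set.EqOn (fun t : ℝ => powLog μ j (z + t * (1 - z)))
      (fun t : ℝ => ∑ i ∈ Finset.range (j + 1),
        (j.choose i * (((1 - t : ℝ) : ℂ) ^ μ * (Real.log (1 - t) : ℂ) ^ (j - i))) * powLog μ i z)
      (Set.uIoo 0 1) := by
  intro t ht
  rw [Set.uIoo_of_le zero_le_one] at ht
  have ht1 : 0 < 1 - t := by linarith [ht.2]
  have hz1 : 1 - z ≠ 0 := sub_ne_zero.mpr hz.symm
  have hsplit : 1 - (z + t * (1 - z)) = ((1 - t : ℝ) : ℂ) * (1 - z) := by push_cast; ring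
  simp only [powLog]
  rw [hsplit, ofReal_mul_cpow_of_pos ht1 hz1, log_ofReal_mul ht1 hz1,
    add_comm (Real.log (1 - t) : ℂ), add_pow, Finset.mul_sum]
  exact Finset.sum_congr rfl fun i _ => by ring

theorem intervalIntegrable_powLog_segment {μ z : ℂ} (hμ : -1 < μ.re) (j : ℕ) (hz : z ≠ 1) :
    IntervalIntegrable (fun t : ℝ => powLog μ j (z + t * (1 - z))) volume 0 1 := by
  have hsum := IntervalIntegrable.sum (Finset.range (j + 1)) fun i _ =>
    ((intervalIntegrable_one_sub_cpow_mul_log_pow hμ (j - i)).const_mul (j.choose i : ℂ)).mul_const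
      (powLog μ i z)
  rw [Finset.sum_fn] at hsum
  exact hsum.congr_uIoo (eqOn_powLog_segment μ j hz).symm

theorem cesaroStar_powLog {μ z : ℂ} (hμ : -1 < μ.re) (j : ℕ) (hz : z ≠ 1) :
    cesaroStar (powLog μ j) z = (∑ i ∈ Finset.range (j + 1),
      (j.choose i * ∫ t in (0 : ℝ)..1, ((1 - t : ℝ) : ℂ) ^ μ * (Real.log (1 - t) : ℂ) ^ (j - i))
        • powLog μ i) z := by
  rw [cesaroStar, intervalIntegral.integral_congr_uIoo (eqOn_powLog_segment μ j hz),
    intervalIntegral.integral_finsetSum fun i _ =>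
      ((intervalIntegrable_one_sub_cpow_mul_log_pow hμ (j - i)).const_mul _).mul_const _]
  simp only [Finset.sum_apply, Pi.smul_apply, smul_eq_mul, intervalIntegral.integral_mul_const,
    intervalIntegral.integral_const_mul]

theorem cesaroStar_invariant_log_span (μ : ℂ) (hμ : -(1/2 : ℝ) < μ.re) (k : ℕ) :
    ∀ f ∈ Submodule.span ℂ
        ((fun j : ℕ => fun z : ℂ => (1 - z) ^ μ * (Complex.log (1 - z)) ^ j) '' Set.Iic k),
      ∃ g ∈ Submodule.span ℂ
        ((fun j : ℕ => fun z : ℂ => (1 - z) ^ μ * (Complex.log (1 - z)) ^ j) '' Set.Iic k),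
        ∀ z ∈ ball (0 : ℂ) 1, cesaroStar f z = g z := by
  have hμ_re : -1 < μ.re := by linarith
  have hz_ne : ∀ z ∈ ball (0 : ℂ) 1, z ≠ 1 := fun z hz h => by simp [h] at hz
  intro f hf
  refine exists_eqOn_cesaroStar_of_mem_span (e := powLog μ)
    (fun j _ z hz => intervalIntegrable_powLog_segment hμ_re j (hz_ne z hz))
    (fun j hj => ⟨_, ?_, fun z hz => cesaroStar_powLog hμ_re j (hz_ne z hz)⟩) hf
  refine Submodule.sum_mem _ fun i hi => Submodule.smul_mem _ _ (Submodule.subset_span ?_)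
  exact ⟨i, (Finset.mem_range_succ_iff.mp hi).trans hj, rfl⟩
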